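/- arXiv:2306.04945 — 4 statements merged into one kernel-verified Lean document; each statement's English description precedes it below -/
import Mathlib

section
/- The weighted coverage price function is arbitrage-free: if the union of the bundles Q₁,…,Q_k determines the bundle Q given D (i.e., for every D' : 𝔻, if Qᵢ D' = Qᵢ D for all i = 1,…,k then Q D' = Q D), then p^{wc}(Q, D) ≤ Σ_{i=1}^k p^{wc}(Qᵢ, D). -/
open scoped Classical

/-- The conflict set of a query bundle `Q` with respect to the support set `S`
and the true database `D`. -/
noncomputable def conflictSet {𝔻 α : Type} (S : Finset 𝔻) (D : 𝔻) (Q : 𝔻 → α) :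
    Finset 𝔻 :=
  S.filter (fun D' => Q D' ≠ Q D)

/-- The weighted coverage price of a query bundle: the sum of the weights of the
possible databases in its conflict set. -/
noncomputable def wcPrice {𝔻 α : Type} (S : Finset 𝔻) (w : 𝔻 → ℝ) (D : 𝔻)
    (Q : 𝔻 → α) : ℝ :=
  ∑ D' ∈ conflictSet S D Q, w D'


lemma sum_biUnion_le_aux {ι γ : Type*} [DecidableEq γ] (s : Finset ι)
    (t : ι → Finset γ) (w : γ → ℝ) (hw : ∀ x, 0 ≤ w x) :
    ∑ x ∈ s.biUnion t, w x ≤ ∑ i ∈ s, ∑ x ∈ t i, w x := by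
  induction s using Finset.induction with
  | empty => simp
  | @insert a s' hju ih =>
    rw [Finset.biUnion_insert, Finset.sum_insert hju]
    have h1 : ∑ x ∈ t a ∪ s'.biUnion t, w x + ∑ x ∈ t a ∩ s'.biUnion t, w x
        = ∑ x ∈ t a, w x + ∑ x ∈ s'.biUnion t, w x := Finset.sum_union_inter
    have h2 : 0 ≤ ∑ x ∈ t a ∩ s'.biUnion t, w x :=
      Finset.sum_nonneg (fun x _ => hw x)
    linarith

/-- The weighted coverage price function is arbitrage-free: if the union of the
bundles `Qs 1, …, Qs k` determines `Q` given `D`, then the weighted coverage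
price of `Q` is at most the sum of the weighted coverage prices of the `Qs i`. -/
theorem wcPrice_arbitrageFree {𝔻 : Type} (S : Finset 𝔻) (D : 𝔻) (w : 𝔻 → ℝ)
    (hw : ∀ D' : 𝔻, 0 ≤ w D')
    (k : ℕ) (α : Fin k → Type) (Qs : ∀ i, 𝔻 → α i) {β : Type} (Q : 𝔻 → β)
    (h : ∀ D' : 𝔻, (∀ i, Qs i D' = Qs i D) → Q D' = Q D) :
    wcPrice S w D Q ≤ ∑ i, wcPrice S w D (Qs i) := by
  have hsub : conflictSet S D Q ⊆
      Finset.univ.biUnion (fun i => conflictSet S D (Qs i)) := by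
    intro D' hD'
    simp only [conflictSet, Finset.mem_filter] at hD'
    obtain ⟨hS, hne⟩ := hD'
    by_contra hc
    simp only [Finset.mem_biUnion, Finset.mem_univ, conflictSet,
      Finset.mem_filter, not_exists, not_and, true_implies, not_not] at hc
    exact hne (h D' (fun i => hc i hS))
  calc wcPrice S w D Q
      ≤ ∑ D' ∈ Finset.univ.biUnion (fun i => conflictSet S D (Qs i)), w D' :=
        Finset.sum_le_sum_of_subset_of_nonneg hsub (fun x _ _ => hw x)
    _ ≤ ∑ i, wcPrice S w D (Qs i) :=
        sum_biUnion_le_aux _ _ _ hw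
end

section
/- Let π be an arbitrage-free price function for noisy linear queries. Then π decays at most like 1/v: for every q ∈ ℝⁿ, every v ≥ 0, and every positive integer m, it holds that π(q, m·v) ≥ π(q, v)/m. (In particular, as v → ∞, π(q, v) = Ω(1/v).) -/
/-- A price function `π` on priced noisy linear queries `(q, v)` (with `q ∈ ℝⁿ` a
linear query and `v ≥ 0` the variance of the added noise) is arbitrage-free if
whenever `(q, v)` is determined by a finite family `(qs j, vs j)`, i.e. there are
coefficients `c` with `∑ j, c j • qs j = q` and `∑ j, (c j)^2 * vs j ≤ v`, then
`π q v ≤ ∑ j, π (qs j) (vs j)`. -/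
def ArbitrageFreeNoisy {n : ℕ} (π : (Fin n → ℝ) → ℝ → ℝ) : Prop :=
  ∀ (k : ℕ) (qs : Fin k → Fin n → ℝ) (vs : Fin k → ℝ), (∀ j, 0 ≤ vs j) →
    ∀ (q : Fin n → ℝ) (v : ℝ), 0 ≤ v →
      ∀ c : Fin k → ℝ, (∑ j, c j • qs j) = q → (∑ j, (c j) ^ 2 * vs j) ≤ v →
        π q v ≤ ∑ j, π (qs j) (vs j)

/-- An arbitrage-free price function decays at most like `1 / v`:
`π q (m * v) ≥ π q v / m` for every positive integer `m`. -/
theorem arbitrageFreeNoisy_decay {n : ℕ} (π : (Fin n → ℝ) → ℝ → ℝ)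
    (hπ : ArbitrageFreeNoisy π) (q : Fin n → ℝ) (v : ℝ) (hv : 0 ≤ v)
    (m : ℕ) (hm : 0 < m) :
    π q v / (m : ℝ) ≤ π q ((m : ℝ) * v) := by
  have hm' : (0 : ℝ) < m := by exact_mod_cast hm
  have key := hπ m (fun _ => q) (fun _ => (m : ℝ) * v)
      (fun j => mul_nonneg hm'.le hv) q v hv (fun _ => 1 / (m : ℝ))
      (by
        rw [Finset.sum_const, Finset.card_univ, Fintype.card_fin]
        ext i
        simp only [Pi.smul_apply, smul_eq_mul, nsmul_eq_mul]
        field_simp)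
      (by
        rw [Finset.sum_const, Finset.card_univ, Fintype.card_fin, nsmul_eq_mul]
        rw [div_pow, one_pow]
        apply le_of_eq
        field_simp)
  rw [Finset.sum_const, Finset.card_univ, Fintype.card_fin, nsmul_eq_mul] at key
  rw [div_le_iff₀ hm']
  linarith [key]
end

section
/- Let π be an arbitrage-free price function for noisy linear queries, and suppose that for some v₀ > 0 the map q ↦ π(q, v₀) is continuous at q = 0. Then infinite noise is free: for every q ∈ ℝⁿ, π(q, v) tends to 0 as v → ∞. -/
/-- Infinite noise is free: if an arbitrage-free price function `π` is, for some
variance `v₀ > 0`, continuous in the query at `q = 0`, then for every query `q`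
the price `π q v` tends to `0` as `v → ∞`. -/
theorem arbitrageFreeNoisy_tendsto_zero {n : ℕ} (π : (Fin n → ℝ) → ℝ → ℝ)
    (hπ : ArbitrageFreeNoisy π) (v₀ : ℝ) (hv₀ : 0 < v₀)
    (hcont : ContinuousAt (fun q : Fin n → ℝ => π q v₀) 0) (q : Fin n → ℝ) :
    Filter.Tendsto (fun v => π q v) Filter.atTop (nhds 0) := by
  -- π 0 w = 0 for all w ≥ 0
  have hzero : ∀ w : ℝ, 0 ≤ w → π 0 w = 0 := by
    intro w hw
    have h1 : π 0 w ≤ 0 := by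
      have := hπ 0 (fun _ => 0) (fun _ => 0) (fun j => le_refl 0) 0 w hw
        (fun _ => 0) (by simp) (by simpa using hw)
      simpa using this
    have h2 : π 0 w ≤ 2 * π 0 w := by
      have := hπ 2 (fun _ => 0) (fun _ => w) (fun _ => hw) 0 w hw ![1, 0]
        (by simp) (by simp [Fin.sum_univ_two])
      simpa [Fin.sum_univ_two] using this
    linarith
  have hprod : ∀ v : ℝ, 0 < v → Real.sqrt (v / v₀) * Real.sqrt (v₀ / v) = 1 := by
    intro v hv
    rw [← Real.sqrt_mul (by positivity)]
    rw [show v / v₀ * (v₀ / v) = 1 by field_simp]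
    exact Real.sqrt_one
  have hsq : ∀ v : ℝ, 0 < v → (Real.sqrt (v / v₀)) ^ 2 * v₀ = v := by
    intro v hv
    rw [Real.sq_sqrt (by positivity)]
    field_simp
  -- upper bound
  have hub : ∀ v : ℝ, 0 < v → π q v ≤ π (Real.sqrt (v₀ / v) • q) v₀ := by
    intro v hv
    have := hπ 1 (fun _ => Real.sqrt (v₀ / v) • q) (fun _ => v₀) (fun _ => hv₀.le)
      q v hv.le (fun _ => Real.sqrt (v / v₀))
      (by simp [smul_smul, hprod v hv])
      (by simp [hsq v hv])
    simpa using this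
  -- lower bound
  have hlb : ∀ v : ℝ, 0 < v → -π (Real.sqrt (v₀ / v) • (-q)) v₀ ≤ π q v := by
    intro v hv
    have := hπ 2 ![q, Real.sqrt (v₀ / v) • (-q)] ![v, v₀]
      (fun j => by fin_cases j <;> simp [hv.le, hv₀.le])
      0 (2 * v) (by linarith) ![1, Real.sqrt (v / v₀)]
      (by
        simp [Fin.sum_univ_two, smul_smul, hprod v hv])
      (by
        simp [Fin.sum_univ_two, hsq v hv]
        linarith)
    rw [hzero (2 * v) (by linarith)] at this
    simp [Fin.sum_univ_two, smul_neg] at this ⊢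
    linarith
  -- the scalar tends to 0
  have hs : Filter.Tendsto (fun v : ℝ => Real.sqrt (v₀ / v)) Filter.atTop (nhds 0) := by
    have h0 : Filter.Tendsto (fun v : ℝ => v₀ / v) Filter.atTop (nhds 0) :=
      Filter.Tendsto.div_atTop tendsto_const_nhds Filter.tendsto_id
    have := (Real.continuous_sqrt.tendsto' 0 0 Real.sqrt_zero).comp h0
    exact this
  have hπ0 : π 0 v₀ = 0 := hzero v₀ hv₀.le
  have hlim : ∀ r : Fin n → ℝ,
      Filter.Tendsto (fun v : ℝ => π (Real.sqrt (v₀ / v) • r) v₀) Filter.atTop (nhds 0) := by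
    intro r
    have hsmul : Filter.Tendsto (fun v : ℝ => Real.sqrt (v₀ / v) • r) Filter.atTop
        (nhds (0 : Fin n → ℝ)) := by
      have := hs.smul_const r
      simpa using this
    have := (hcont.tendsto).comp hsmul
    rw [hπ0] at this
    exact this
  have hlim1 := hlim q
  have hlim2 : Filter.Tendsto (fun v : ℝ => -π (Real.sqrt (v₀ / v) • (-q)) v₀)
      Filter.atTop (nhds 0) := by
    have := (hlim (-q)).neg
    simpa using this
  refine tendsto_of_tendsto_of_tendsto_of_le_of_le' hlim2 hlim1 ?_ ?_
  · filter_upwards [Filter.eventually_gt_atTop 0] with v hv using hlb v hv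
  · filter_upwards [Filter.eventually_gt_atTop 0] with v hv using hub v hv
end

section
/- The two formulas for the Shapley value coincide: for every i ∈ D, Σ_{S ⊆ D \ {i}} (1 / (N · binom(N−1, |S|))) · (U(S ∪ {i}) − U(S)) = (1/N!) · Σ_{π a permutation (linear order) of D} (U(P_i^π ∪ {i}) − U(P_i^π)), where P_i^π denotes the set of elements of D preceding i in the order π. -/
/-- The Shapley value of the data owner `i` with respect to the utility
function `U` on coalitions of the finite set `D` of data owners:
`sv i = Σ_{S ⊆ D \ {i}} (1 / (N · C(N-1, |S|))) · (U (S ∪ {i}) − U S)`. -/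
noncomputable def shapley {D : Type} [Fintype D] [DecidableEq D]
    (U : Finset D → ℝ) (i : D) : ℝ :=
  ∑ S ∈ (Finset.univ.erase i).powerset,
    (1 / ((Fintype.card D : ℝ) * ((Fintype.card D - 1).choose S.card : ℝ))) *
      (U (insert i S) - U S)

section Aux

set_option linter.unusedSectionVars false

variable {D : Type} [Fintype D] [DecidableEq D]

private lemma card_lt_of_not_mem {i : D} {S : Finset D} (hiS : i ∉ S) :
    S.card < Fintype.card D := by
  have h : S ⊂ Finset.univ := by
    refine Finset.ssubset_univ_iff.mpr fun h => hiS ?_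
    rw [h]; exact Finset.mem_univ i
  simpa using Finset.card_lt_card h

private lemma add_bound {i : D} {S : Finset D} (hiS : i ∉ S)
    (b : Fin (Fintype.card D - 1 - S.card)) :
    S.card + 1 + (b : ℕ) < Fintype.card D := by
  have h1 := b.isLt
  have h2 := card_lt_of_not_mem hiS
  omega

private lemma not_mem_insert {i : D} {S : Finset D} {x : D}
    (h : ¬x ∈ S) (h2 : ¬x = i) : x ∉ insert i S := by
  simp [Finset.mem_insert, h, h2]

private def gf (i : D) (S : Finset D) (hiS : i ∉ S)
    (e₁ : Fin S.card ≃ {x // x ∈ S})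
    (e₂ : Fin (Fintype.card D - 1 - S.card) ≃ {x : D // x ∉ insert i S})
    (j : Fin (Fintype.card D)) : D :=
  if h : (j : ℕ) < S.card then (e₁ ⟨j, h⟩ : D)
  else if h2 : (j : ℕ) = S.card then i
  else (e₂ ⟨(j : ℕ) - (S.card + 1), by
    have h3 := j.isLt
    have h4 := card_lt_of_not_mem hiS
    omega⟩ : D)

private def gg (i : D) (S : Finset D) (hiS : i ∉ S)
    (e₁ : Fin S.card ≃ {x // x ∈ S})
    (e₂ : Fin (Fintype.card D - 1 - S.card) ≃ {x : D // x ∉ insert i S})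
    (x : D) : Fin (Fintype.card D) :=
  if h : x ∈ S then ⟨(e₁.symm ⟨x, h⟩ : ℕ),
    lt_trans (Fin.isLt _) (card_lt_of_not_mem hiS)⟩
  else if h2 : x = i then ⟨S.card, card_lt_of_not_mem hiS⟩
  else ⟨S.card + 1 + (e₂.symm ⟨x, not_mem_insert h h2⟩ : ℕ),
    add_bound hiS _⟩

private lemma gf_lt (i : D) (S : Finset D) (hiS : i ∉ S) (e₁) (e₂)
    (j : Fin (Fintype.card D)) (hj : (j : ℕ) < S.card) :
    gf i S hiS e₁ e₂ j = (e₁ ⟨(j : ℕ), hj⟩ : D) := by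
  unfold gf; rw [dif_pos hj]

private lemma gf_eq (i : D) (S : Finset D) (hiS : i ∉ S) (e₁) (e₂)
    (j : Fin (Fintype.card D)) (hj : (j : ℕ) = S.card) :
    gf i S hiS e₁ e₂ j = i := by
  unfold gf; rw [dif_neg (by omega), dif_pos hj]

private lemma gf_top (i : D) (S : Finset D) (hiS : i ∉ S) (e₁) (e₂)
    (j : Fin (Fintype.card D)) (b : Fin (Fintype.card D - 1 - S.card))
    (hj : (j : ℕ) = S.card + 1 + (b : ℕ)) :
    gf i S hiS e₁ e₂ j = (e₂ b : D) := by
  unfold gf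
  rw [dif_neg (by omega), dif_neg (by omega)]
  congr 1
  refine congrArg e₂ (Fin.ext ?_)
  show (j : ℕ) - (S.card + 1) = (b : ℕ)
  omega

private lemma gg_val_mem (i : D) (S : Finset D) (hiS : i ∉ S) (e₁) (e₂)
    {x : D} (h : x ∈ S) :
    (gg i S hiS e₁ e₂ x : ℕ) = (e₁.symm ⟨x, h⟩ : ℕ) := by
  unfold gg; rw [dif_pos h]

private lemma gg_val_i (i : D) (S : Finset D) (hiS : i ∉ S) (e₁) (e₂) :
    (gg i S hiS e₁ e₂ i : ℕ) = S.card := by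
  unfold gg; rw [dif_neg hiS, dif_pos rfl]

private lemma gg_val_not (i : D) (S : Finset D) (hiS : i ∉ S) (e₁) (e₂)
    {x : D} (h : ¬x ∈ S) (h2 : ¬x = i) :
    (gg i S hiS e₁ e₂ x : ℕ)
      = S.card + 1 + (e₂.symm ⟨x, not_mem_insert h h2⟩ : ℕ) := by
  unfold gg; rw [dif_neg h, dif_neg h2]

private def glue (i : D) (S : Finset D) (hiS : i ∉ S)
    (e₁ : Fin S.card ≃ {x // x ∈ S})
    (e₂ : Fin (Fintype.card D - 1 - S.card) ≃ {x : D // x ∉ insert i S}) :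
    Fin (Fintype.card D) ≃ D where
  toFun := gf i S hiS e₁ e₂
  invFun := gg i S hiS e₁ e₂
  left_inv := by
    intro j
    by_cases h : (j : ℕ) < S.card
    · rw [gf_lt i S hiS e₁ e₂ j h]
      apply Fin.ext
      rw [gg_val_mem i S hiS e₁ e₂ (e₁ ⟨(j : ℕ), h⟩).2, Subtype.coe_eta,
        Equiv.symm_apply_apply]
    · by_cases h2 : (j : ℕ) = S.card
      · rw [gf_eq i S hiS e₁ e₂ j h2]
        apply Fin.ext
        rw [gg_val_i i S hiS e₁ e₂]
        exact h2.symm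
      · have hb : (j : ℕ) - (S.card + 1) < Fintype.card D - 1 - S.card := by
          have h3 := j.isLt
          have h4 := card_lt_of_not_mem hiS
          omega
        have hj : (j : ℕ) = S.card + 1 + ((⟨(j : ℕ) - (S.card + 1), hb⟩ :
            Fin (Fintype.card D - 1 - S.card)) : ℕ) := by
          show (j : ℕ) = S.card + 1 + ((j : ℕ) - (S.card + 1))
          omega
        rw [gf_top i S hiS e₁ e₂ j ⟨(j : ℕ) - (S.card + 1), hb⟩ hj]
        have hy := (e₂ ⟨(j : ℕ) - (S.card + 1), hb⟩).2
        have hy1 : ¬((e₂ ⟨(j : ℕ) - (S.card + 1), hb⟩ : D) ∈ S) :=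
          fun hc => hy (Finset.mem_insert_of_mem hc)
        have hy2 : ¬((e₂ ⟨(j : ℕ) - (S.card + 1), hb⟩ : D) = i) :=
          fun hc => hy (by rw [hc]; exact Finset.mem_insert_self i S)
        apply Fin.ext
        rw [gg_val_not i S hiS e₁ e₂ hy1 hy2, Subtype.coe_eta,
          Equiv.symm_apply_apply]
        show S.card + 1 + ((j : ℕ) - (S.card + 1)) = (j : ℕ)
        omega
  right_inv := by
    intro x
    by_cases h : x ∈ S
    · have hj : (gg i S hiS e₁ e₂ x : ℕ) < S.card := by
        rw [gg_val_mem i S hiS e₁ e₂ h]; exact Fin.isLt _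
      rw [gf_lt i S hiS e₁ e₂ _ hj]
      have he : (⟨(gg i S hiS e₁ e₂ x : ℕ), hj⟩ : Fin S.card) = e₁.symm ⟨x, h⟩ :=
        Fin.ext (gg_val_mem i S hiS e₁ e₂ h)
      rw [he, Equiv.apply_symm_apply]
    · by_cases h2 : x = i
      · rw [gf_eq i S hiS e₁ e₂ _ (by rw [h2]; exact gg_val_i i S hiS e₁ e₂)]
        exact h2.symm
      · rw [gf_top i S hiS e₁ e₂ _ (e₂.symm ⟨x, not_mem_insert h h2⟩)
          (gg_val_not i S hiS e₁ e₂ h h2), Equiv.apply_symm_apply]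

private lemma glue_symm_lt_iff (i : D) (S : Finset D) (hiS : i ∉ S) (e₁) (e₂) (j : D) :
    (glue i S hiS e₁ e₂).symm j < (glue i S hiS e₁ e₂).symm i ↔ j ∈ S := by
  show gg i S hiS e₁ e₂ j < gg i S hiS e₁ e₂ i ↔ j ∈ S
  rw [Fin.lt_def, gg_val_i i S hiS e₁ e₂]
  by_cases h : j ∈ S
  · have := gg_val_mem i S hiS e₁ e₂ h
    rw [this]
    simp [h, Fin.isLt]
  · by_cases h2 : j = i
    · rw [h2, gg_val_i i S hiS e₁ e₂]
      exact iff_of_false (lt_irrefl _) hiS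
    · rw [gg_val_not i S hiS e₁ e₂ h h2]
      exact iff_of_false (by omega) h

private lemma glue_pred (i : D) (S : Finset D) (hiS : i ∉ S) (e₁) (e₂) :
    (Finset.univ.filter fun j =>
      (glue i S hiS e₁ e₂).symm j < (glue i S hiS e₁ e₂).symm i) = S := by
  ext j
  simp [glue_symm_lt_iff]

private lemma glue_inj (i : D) (S : Finset D) (hiS : i ∉ S) :
    Function.Injective (fun p : (Fin S.card ≃ {x // x ∈ S}) ×
        (Fin (Fintype.card D - 1 - S.card) ≃ {x : D // x ∉ insert i S}) =>
      glue i S hiS p.1 p.2) := by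
  intro p q hpq
  have hfun : ∀ j, gf i S hiS p.1 p.2 j = gf i S hiS q.1 q.2 j :=
    fun j => congrFun (congrArg Equiv.toFun hpq) j
  have h1 : p.1 = q.1 := by
    refine Equiv.ext fun a => Subtype.ext ?_
    have haN : (a : ℕ) < Fintype.card D := lt_trans a.isLt (card_lt_of_not_mem hiS)
    have t1 := gf_lt i S hiS p.1 p.2 ⟨(a : ℕ), haN⟩ a.isLt
    have t2 := gf_lt i S hiS q.1 q.2 ⟨(a : ℕ), haN⟩ a.isLt
    exact t1.symm.trans ((hfun ⟨(a : ℕ), haN⟩).trans t2)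
  have h2 : p.2 = q.2 := by
    refine Equiv.ext fun b => Subtype.ext ?_
    have t1 := gf_top i S hiS p.1 p.2 ⟨S.card + 1 + (b : ℕ), add_bound hiS b⟩ b rfl
    have t2 := gf_top i S hiS q.1 q.2 ⟨S.card + 1 + (b : ℕ), add_bound hiS b⟩ b rfl
    exact t1.symm.trans ((hfun ⟨S.card + 1 + (b : ℕ), add_bound hiS b⟩).trans t2)
  exact Prod.ext h1 h2

private lemma fiber_card (i : D) (S : Finset D) (hS : S ∈ (Finset.univ.erase i).powerset) :
    ((Finset.univ : Finset (Fin (Fintype.card D) ≃ D)).filter fun π =>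
        (Finset.univ.filter fun j => π.symm j < π.symm i) = S).card
      = S.card.factorial * (Fintype.card D - 1 - S.card).factorial := by
  classical
  set N := Fintype.card D with hN
  set E := (Finset.univ : Finset D).erase i with hE
  have hlow : ∀ S' ∈ E.powerset,
      S'.card.factorial * (N - 1 - S'.card).factorial ≤
      ((Finset.univ : Finset (Fin N ≃ D)).filter fun π =>
        (Finset.univ.filter fun j => π.symm j < π.symm i) = S').card := by
    intro S' hS'
    have hiS' : i ∉ S' := fun hc =>
      (Finset.mem_erase.mp ((Finset.mem_powerset.mp hS') hc)).1 rfl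
    have hcard1 : Fintype.card {x // x ∈ S'} = S'.card := Fintype.card_coe S'
    have hcard2 : Fintype.card {x : D // x ∉ insert i S'} = N - 1 - S'.card := by
      have hins : Fintype.card {x : D // x ∈ insert i S'} = S'.card + 1 := by
        rw [Fintype.card_coe, Finset.card_insert_of_notMem hiS']
      have hc := Fintype.card_subtype_compl (fun x : D => x ∈ insert i S')
      rw [hins] at hc
      rw [hc]
      have := card_lt_of_not_mem hiS'
      omega
    have e₁0 : Fin S'.card ≃ {x // x ∈ S'} :=
      Fintype.equivOfCardEq (by rw [Fintype.card_fin, hcard1])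
    have e₂0 : Fin (N - 1 - S'.card) ≃ {x : D // x ∉ insert i S'} :=
      Fintype.equivOfCardEq (by rw [Fintype.card_fin, hcard2])
    calc S'.card.factorial * (N - 1 - S'.card).factorial
        = Fintype.card ((Fin S'.card ≃ {x // x ∈ S'}) ×
            (Fin (N - 1 - S'.card) ≃ {x : D // x ∉ insert i S'})) := by
          rw [Fintype.card_prod, Fintype.card_equiv e₁0,
            Fintype.card_equiv e₂0, Fintype.card_fin, Fintype.card_fin]
      _ ≤ _ := by
          rw [← Finset.card_univ]
          apply Finset.card_le_card_of_injOn
            (fun p => glue i S' hiS' p.1 p.2)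
          · intro p _
            simp only [Finset.mem_coe, Finset.mem_filter, Finset.mem_univ, true_and]
            exact glue_pred i S' hiS' p.1 p.2
          · exact Set.injOn_of_injective (glue_inj i S' hiS')
  have htotal : ∑ S' ∈ E.powerset,
      ((Finset.univ : Finset (Fin N ≃ D)).filter fun π =>
        (Finset.univ.filter fun j => π.symm j < π.symm i) = S').card
      = N.factorial := by
    rw [← Finset.card_eq_sum_card_fiberwise (f := fun π : Fin N ≃ D =>
        Finset.univ.filter fun j => π.symm j < π.symm i)
        (t := E.powerset) (s := Finset.univ)]
    · rw [Finset.card_univ, Fintype.card_equiv ((Fintype.equivFin D).symm),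
        Fintype.card_fin]
    · intro π _
      rw [Finset.mem_coe, Finset.mem_powerset]
      intro j hj
      simp only [Finset.mem_filter, Finset.mem_univ, true_and] at hj
      rw [hE, Finset.mem_erase]
      refine ⟨fun hc => ?_, Finset.mem_univ j⟩
      subst hc
      exact lt_irrefl _ hj
  have hNpos : 0 < N := Fintype.card_pos_iff.mpr ⟨i⟩
  have hEcard : E.card = N - 1 := by
    rw [hE, Finset.card_erase_of_mem (Finset.mem_univ i), Finset.card_univ]
  have htotal2 : ∑ S' ∈ E.powerset,
      S'.card.factorial * (N - 1 - S'.card).factorial = N.factorial := by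
    rw [Finset.sum_powerset]
    have hstep : ∀ k ∈ Finset.range (E.card + 1),
        (∑ S' ∈ Finset.powersetCard k E,
          S'.card.factorial * (N - 1 - S'.card).factorial)
        = (N - 1).factorial := by
      intro k hk
      rw [Finset.mem_range] at hk
      have hkle : k ≤ N - 1 := by omega
      have hc : ∀ S' ∈ Finset.powersetCard k E,
          S'.card.factorial * (N - 1 - S'.card).factorial
          = k.factorial * (N - 1 - k).factorial := by
        intro S' hS'
        rw [(Finset.mem_powersetCard.mp hS').2]
      rw [Finset.sum_congr rfl hc, Finset.sum_const, Finset.card_powersetCard,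
        hEcard, smul_eq_mul, ← mul_assoc,
        Nat.choose_mul_factorial_mul_factorial hkle]
    rw [Finset.sum_congr rfl hstep, Finset.sum_const, Finset.card_range,
      hEcard, smul_eq_mul]
    have h1 : (N - 1) + 1 = N := by omega
    rw [h1, Nat.mul_factorial_pred hNpos.ne']
  have hall := (Finset.sum_eq_sum_iff_of_le hlow).mp (by rw [htotal2, htotal])
  exact (hall S hS).symm

end Aux

/-- The subset formula for the Shapley value coincides with the permutation
formula: `sv i = (1/N!) Σ_{π} (U (P_i^π ∪ {i}) − U (P_i^π))`, where `π` ranges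
over the linear orderings of `D` (encoded as bijections `Fin N ≃ D`) and
`P_i^π` is the set of elements of `D` preceding `i` in `π`. -/
theorem shapley_eq_perm_formula {D : Type} [Fintype D] [DecidableEq D]
    (hN : 1 ≤ Fintype.card D) (U : Finset D → ℝ) (i : D) :
    shapley U i =
      (1 / (Nat.factorial (Fintype.card D) : ℝ)) *
        ∑ π : Fin (Fintype.card D) ≃ D,
          (U (insert i (Finset.univ.filter fun j => π.symm j < π.symm i)) -
            U (Finset.univ.filter fun j => π.symm j < π.symm i)) := by
  classical
  set N := Fintype.card D with hNdef
  have hmaps : ∀ π : Fin N ≃ D, π ∈ (Finset.univ : Finset (Fin N ≃ D)) →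
      (Finset.univ.filter fun j => π.symm j < π.symm i) ∈
        (Finset.univ.erase i).powerset := by
    intro π _
    rw [Finset.mem_powerset]
    intro j hj
    simp only [Finset.mem_filter, Finset.mem_univ, true_and] at hj
    rw [Finset.mem_erase]
    refine ⟨fun hc => ?_, Finset.mem_univ j⟩
    subst hc
    exact lt_irrefl _ hj
  have hsum : ∑ π : Fin N ≃ D,
      (U (insert i (Finset.univ.filter fun j => π.symm j < π.symm i)) -
        U (Finset.univ.filter fun j => π.symm j < π.symm i))
      = ∑ S ∈ (Finset.univ.erase i).powerset,
          ((S.card.factorial : ℝ) * ((N - 1 - S.card).factorial : ℝ)) *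
            (U (insert i S) - U S) := by
    rw [← Finset.sum_fiberwise_of_maps_to hmaps]
    refine Finset.sum_congr rfl fun S hS => ?_
    have hc : ∀ π ∈ (Finset.univ : Finset (Fin N ≃ D)).filter fun π =>
        (Finset.univ.filter fun j => π.symm j < π.symm i) = S,
        (U (insert i (Finset.univ.filter fun j => π.symm j < π.symm i)) -
          U (Finset.univ.filter fun j => π.symm j < π.symm i))
        = U (insert i S) - U S := by
      intro π hπ
      rw [(Finset.mem_filter.mp hπ).2]
    rw [Finset.sum_congr rfl hc, Finset.sum_const, fiber_card i S hS,
      nsmul_eq_mul]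
    push_cast
    ring
  rw [hsum, Finset.mul_sum, shapley]
  refine Finset.sum_congr rfl fun S hS => ?_
  have hiS : i ∉ S := fun hc =>
    (Finset.mem_erase.mp ((Finset.mem_powerset.mp hS) hc)).1 rfl
  have hsle : S.card ≤ N - 1 := by
    have := card_lt_of_not_mem hiS
    omega
  have hkey : (N : ℕ) * ((N - 1).choose S.card) *
      (S.card.factorial * (N - 1 - S.card).factorial) = N.factorial := by
    have h1 : (N - 1).choose S.card * S.card.factorial * (N - 1 - S.card).factorial
        = (N - 1).factorial := Nat.choose_mul_factorial_mul_factorial hsle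
    calc (N : ℕ) * ((N - 1).choose S.card) *
        (S.card.factorial * (N - 1 - S.card).factorial)
        = N * ((N - 1).choose S.card * S.card.factorial *
            (N - 1 - S.card).factorial) := by ring
      _ = N * (N - 1).factorial := by rw [h1]
      _ = N.factorial := Nat.mul_factorial_pred (by omega)
  have hkeyR : (N : ℝ) * ((N - 1).choose S.card : ℝ) *
      ((S.card.factorial : ℝ) * ((N - 1 - S.card).factorial : ℝ)) = (N.factorial : ℝ) := by
    exact_mod_cast hkey
  have hch : ((N - 1).choose S.card : ℝ) ≠ 0 := by
    exact_mod_cast (Nat.choose_pos hsle).ne'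
  have hNne : (N : ℝ) ≠ 0 := by
    exact_mod_cast (by omega : N ≠ 0)
  have hfacne : (N.factorial : ℝ) ≠ 0 := by
    exact_mod_cast N.factorial_ne_zero
  rw [← mul_assoc]
  congr 1
  rw [div_mul_eq_mul_div, one_mul, div_eq_div_iff (by positivity) hfacne,
    one_mul]
  linarith [hkeyR]
end
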